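/- Let c be an admissible edge weighting of Q_n and Q_n(c) its support graph. Then: (a) for every odd vertex j ∈ V_n(c) and all even vertices i, i' ∈ U_n(c) lying in different connected components of Q_n(c), the (i,i')-entry of the matrix ρ_c(p_j) is 0; and (b) if Q_n(c) is connected, then the subalgebra of the matrix algebra M_{U_n(c)}(ℂ) generated by the matrices ρ_c(p_x), x a vertex of Q_n, is all of M_{U_n(c)}(ℂ). -/

import Mathlib

open scoped Classical

noncomputable section

/-- Adjacency in the hypercube `Q_n`: differ in exactly one coordinate. -/
def hcAdj {n : ℕ} (x y : Fin n → Bool) : Prop :=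
  (Finset.univ.filter (fun k => x k ≠ y k)).card = 1

/-- Flip the `k`-th coordinate. -/
def hcFlip {n : ℕ} (x : Fin n → Bool) (k : Fin n) : Fin n → Bool :=
  Function.update x k (!x k)

/-- A vertex of `Q_n` is even if it has an even number of coordinates equal to `true`. -/
def hcEven {n : ℕ} (x : Fin n → Bool) : Prop :=
  (Finset.univ.filter (fun k => x k = true)).card % 2 = 0

/-- `i` belongs to `U_n(c)`: `i` is even and incident to an edge of nonzero weight. -/
def inU {n : ℕ} (c : (Fin n → Bool) → (Fin n → Bool) → ℂ) (i : Fin n → Bool) : Prop :=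
  hcEven i ∧ ∃ j, hcAdj i j ∧ c i j ≠ 0

/-- `j` belongs to `V_n(c)`: `j` is odd and incident to an edge of nonzero weight. -/
def inV {n : ℕ} (c : (Fin n → Bool) → (Fin n → Bool) → ℂ) (j : Fin n → Bool) : Prop :=
  ¬ hcEven j ∧ ∃ i, hcAdj i j ∧ c i j ≠ 0

/-- An edge weighting `c` of `Q_n` (with `c i j` the weight of the edge `{i,j}`,
`i` even, `j` odd) is admissible. -/
def Admissible {n : ℕ} (c : (Fin n → Bool) → (Fin n → Bool) → ℂ) : Prop :=
  (∀ j₁, inV c j₁ → ∀ j₂, inV c j₂ →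
    ∑ i ∈ Finset.univ.filter (fun i => hcEven i ∧ hcAdj i j₁ ∧ hcAdj i j₂),
      c i j₁ * (starRingEnd ℂ) (c i j₂) = if j₁ = j₂ then 1 else 0) ∧
  (∀ i₁, inU c i₁ → ∀ i₂, inU c i₂ →
    ∑ j ∈ Finset.univ.filter (fun j => ¬ hcEven j ∧ hcAdj i₁ j ∧ hcAdj i₂ j),
      c i₁ j * (starRingEnd ℂ) (c i₂ j) = if i₁ = i₂ then 1 else 0)

/-- The support graph `Q_n(c)` of an edge weighting `c`: its edges are the edges of
`Q_n` of nonzero weight. -/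
def suppGraph {n : ℕ} (c : (Fin n → Bool) → (Fin n → Bool) → ℂ) :
    SimpleGraph (Fin n → Bool) where
  Adj a b := (hcEven a ∧ hcAdj a b ∧ c a b ≠ 0) ∨ (hcEven b ∧ hcAdj b a ∧ c b a ≠ 0)
  symm := ⟨by intro a b h; tauto⟩
  loopless := ⟨by
    intro a h
    have : ¬ hcAdj a a := by simp [hcAdj]
    tauto⟩

/-- The finite set `U_n(c)` of supported even vertices. -/
def UFin {n : ℕ} (c : (Fin n → Bool) → (Fin n → Bool) → ℂ) : Finset (Fin n → Bool) :=
  Finset.univ.filter (inU c)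

/-- The finite set `V_n(c)` of supported odd vertices. -/
def VFin {n : ℕ} (c : (Fin n → Bool) → (Fin n → Bool) → ℂ) : Finset (Fin n → Bool) :=
  Finset.univ.filter (inV c)

/-- For an odd vertex `j`, the vector `ψ_j ∈ ℂ^{U_n(c)}` whose `i`-th entry is `c i j`
if `{i,j}` is an edge of `Q_n` and `0` otherwise. -/
def psi {n : ℕ} (c : (Fin n → Bool) → (Fin n → Bool) → ℂ) (j : Fin n → Bool) :
    EuclideanSpace ℂ {i : Fin n → Bool // i ∈ UFin c} :=
  WithLp.toLp 2 fun i => if hcAdj i.1 j then c i.1 j else 0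

/-- The representation `ρ_c`: an even vertex `i ∈ U_n(c)` is sent to the matrix unit
`E_{ii}`, an odd vertex `j ∈ V_n(c)` to the orthogonal projection onto the span of the
unit vector `ψ_j` (the rank-one matrix `ψ_j ψ_j^*`), and every other vertex to `0`. -/
def rhoRep {n : ℕ} (c : (Fin n → Bool) → (Fin n → Bool) → ℂ) (x : Fin n → Bool) :
    Matrix {i : Fin n → Bool // i ∈ UFin c} {i : Fin n → Bool // i ∈ UFin c} ℂ :=
  if hcEven x then (fun i i' => if i.1 = x ∧ i'.1 = x then 1 else 0)
  else (fun i i' => psi c x i * (starRingEnd ℂ) (psi c x i'))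

/-! ### Auxiliary lemmas -/

lemma hcAdj_symm_aux {n : ℕ} {a b : Fin n → Bool} (h : hcAdj a b) : hcAdj b a := by
  unfold hcAdj at *
  rw [Finset.filter_congr
    (fun k _ => by simp [ne_comm] : ∀ k ∈ Finset.univ, (b k ≠ a k) ↔ (a k ≠ b k))]
  exact h

lemma hcAdj_parity_aux {n : ℕ} {a b : Fin n → Bool} (h : hcAdj a b) :
    hcEven a ↔ ¬ hcEven b := by
  obtain ⟨k0, hk0⟩ := Finset.card_eq_one.mp h
  have hne : a k0 ≠ b k0 := by
    have : k0 ∈ Finset.univ.filter (fun k => a k ≠ b k) := hk0 ▸ Finset.mem_singleton_self k0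
    simpa using this
  have heq : ∀ k ∈ Finset.univ.erase k0, a k = b k := by
    intro k hk
    have hk' : k ≠ k0 := (Finset.mem_erase.mp hk).1
    by_contra hkk
    have : k ∈ Finset.univ.filter (fun k => a k ≠ b k) := by simpa using hkk
    rw [hk0] at this
    exact hk' (Finset.mem_singleton.mp this)
  have key : ∀ x : Fin n → Bool,
      (Finset.univ.filter (fun k => x k = true)).card
        = (Finset.univ.erase k0 |>.filter (fun k => x k = true)).card
          + (if x k0 = true then 1 else 0) := by
    intro x
    have : (Finset.univ : Finset (Fin n)) = insert k0 (Finset.univ.erase k0) := by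
      simp [Finset.insert_erase]
    rw [this, Finset.filter_insert]
    split
    · rw [Finset.card_insert_of_notMem (by simp)]; simp
    · simp
  have hsame : (Finset.univ.erase k0 |>.filter (fun k => a k = true)).card
      = (Finset.univ.erase k0 |>.filter (fun k => b k = true)).card := by
    rw [Finset.filter_congr (fun k hk => by rw [heq k hk])]
  unfold hcEven
  rw [key a, key b, hsame]
  rcases Bool.eq_false_or_eq_true (a k0) with h1 | h1 <;>
    rcases Bool.eq_false_or_eq_true (b k0) with h2 | h2 <;>
      simp [h1, h2] at hne ⊢ <;> omega

lemma mem_UFin_iff_aux {n : ℕ} (c : (Fin n → Bool) → (Fin n → Bool) → ℂ)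
    (i : Fin n → Bool) : i ∈ UFin c ↔ inU c i := by simp [UFin]

/-- Let `c` be an admissible edge weighting of `Q_n`.
(a) For every supported odd vertex `j` and all supported even vertices `i, i'` lying in
different connected components of the support graph `Q_n(c)`, the `(i,i')`-entry of
`ρ_c(p_j)` vanishes.
(b) If `Q_n(c)` is connected (any two supported vertices are reachable from one
another), then the subalgebra of `M_{U_n(c)}(ℂ)` generated by the matrices `ρ_c(p_x)`
is the full matrix algebra. -/
theorem rhoRep_block_structure_and_irreducible {n : ℕ} (hn : 1 ≤ n)
    (c : (Fin n → Bool) → (Fin n → Bool) → ℂ) (hadm : Admissible c) :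
    (∀ j, inV c j → ∀ i i' : {i : Fin n → Bool // i ∈ UFin c},
      ¬ (suppGraph c).Reachable i.1 i'.1 → rhoRep c j i i' = 0) ∧
    ((∀ a b, (∃ w, (suppGraph c).Adj a w) → (∃ w, (suppGraph c).Adj b w) →
        (suppGraph c).Reachable a b) →
      Algebra.adjoin ℂ (Set.range (rhoRep c)) = ⊤) := by
  constructor
  · -- part (a)
    intro j hj i i' hnr
    have hodd : ¬ hcEven j := hj.1
    have hi : inU c i.1 := (mem_UFin_iff_aux c i.1).mp i.2
    have hi' : inU c i'.1 := (mem_UFin_iff_aux c i'.1).mp i'.2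
    simp only [show rhoRep c j = (fun i i' => psi c j i * (starRingEnd ℂ) (psi c j i') :
          Matrix {i : Fin n → Bool // i ∈ UFin c} {i : Fin n → Bool // i ∈ UFin c} ℂ) from if_neg hodd]
    by_cases h1 : hcAdj i.1 j ∧ c i.1 j ≠ 0
    · by_cases h2 : hcAdj i'.1 j ∧ c i'.1 j ≠ 0
      · exfalso
        apply hnr
        have a1 : (suppGraph c).Adj i.1 j := Or.inl ⟨hi.1, h1.1, h1.2⟩
        have a2 : (suppGraph c).Adj i'.1 j := Or.inl ⟨hi'.1, h2.1, h2.2⟩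
        exact a1.reachable.trans a2.reachable.symm
      · have : psi c j i' = 0 := by
          unfold psi
          by_cases ha : hcAdj i'.1 j
          · simp only [if_pos ha]
            by_contra hc; exact h2 ⟨ha, hc⟩
          · simp [ha]
        rw [this]; simp
    · have : psi c j i = 0 := by
        unfold psi
        by_cases ha : hcAdj i.1 j
        · simp only [if_pos ha]
          by_contra hc; exact h1 ⟨ha, hc⟩
        · simp [ha]
      rw [this]; simp
  · -- part (b)
    intro hconn
    set A := Algebra.adjoin ℂ (Set.range (rhoRep c)) with hA
    -- diagonal matrix units
    have ediag : ∀ ii : {i : Fin n → Bool // i ∈ UFin c},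
        rhoRep c ii.1 = Matrix.single ii ii (1 : ℂ) := by
      intro ii
      have hev : hcEven ii.1 := ((mem_UFin_iff_aux c ii.1).mp ii.2).1
      ext a b
      simp only [show rhoRep c ii.1 = (fun i i' => if i.1 = ii.1 ∧ i'.1 = ii.1 then 1 else 0 :
          Matrix {i : Fin n → Bool // i ∈ UFin c} {i : Fin n → Bool // i ∈ UFin c} ℂ) from if_pos hev,
        Matrix.single_apply]
      by_cases h1 : a = ii <;> by_cases h2 : b = ii <;>
        simp [h1, h2, Subtype.ext_iff, eq_comm (a := ii)] <;> tauto
    have ediagA : ∀ ii : {i : Fin n → Bool // i ∈ UFin c},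
        Matrix.single ii ii (1 : ℂ) ∈ A := by
      intro ii
      rw [← ediag ii]
      exact Algebra.subset_adjoin ⟨ii.1, rfl⟩
    -- off-diagonal units via odd vertices
    have eAB : ∀ (a b : {i : Fin n → Bool // i ∈ UFin c}) (j : Fin n → Bool),
        ¬ hcEven j → hcAdj a.1 j → hcAdj b.1 j → c a.1 j ≠ 0 → c b.1 j ≠ 0 →
        Matrix.single a b (1 : ℂ) ∈ A := by
      intro a b j hodd haj hbj hca hcb
      have hPA : rhoRep c j ∈ A := Algebra.subset_adjoin ⟨j, rfl⟩
      have hval : rhoRep c j a b = c a.1 j * (starRingEnd ℂ) (c b.1 j) := by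
        simp only [show rhoRep c j = (fun i i' => psi c j i * (starRingEnd ℂ) (psi c j i') :
          Matrix {i : Fin n → Bool // i ∈ UFin c} {i : Fin n → Bool // i ∈ UFin c} ℂ) from if_neg hodd]
        simp [psi, haj, hbj]
      have hval0 : rhoRep c j a b ≠ 0 := by
        rw [hval]
        exact mul_ne_zero hca (by simpa using hcb)
      have hprod : Matrix.single a a (1 : ℂ) * rhoRep c j
            * Matrix.single b b (1 : ℂ)
          = (rhoRep c j a b) • Matrix.single a b (1 : ℂ) := by
        ext x y
        simp only [Matrix.mul_apply, Matrix.single, Matrix.smul_apply,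
          Matrix.of_apply, smul_eq_mul]
        by_cases hx : a = x <;> by_cases hy : b = y <;>
          simp [hx, hy, Finset.sum_ite_eq, Finset.sum_ite_eq'] <;>
          subst_vars <;> simp
      have hmem : (rhoRep c j a b) • Matrix.single a b (1 : ℂ) ∈ A := by
        rw [← hprod]
        exact A.mul_mem (A.mul_mem (ediagA a) hPA) (ediagA b)
      have : Matrix.single a b (1 : ℂ)
          = (rhoRep c j a b)⁻¹ • ((rhoRep c j a b) • Matrix.single a b (1 : ℂ)) := by
        rw [smul_smul, inv_mul_cancel₀ hval0, one_smul]
      rw [this]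
      exact A.smul_mem hmem _
    -- walk induction
    have walkE : ∀ N : ℕ, ∀ (u v : Fin n → Bool), ∀ w : (suppGraph c).Walk u v,
        w.length = N → ∀ (hu : u ∈ UFin c) (hv : v ∈ UFin c),
        Matrix.single (⟨u, hu⟩ : {i : Fin n → Bool // i ∈ UFin c}) ⟨v, hv⟩ (1 : ℂ) ∈ A := by
      intro N
      induction N using Nat.strong_induction_on with
      | _ N ih =>
        intro u v w hlen hu hv
        cases w with
        | nil => exact ediagA ⟨u, hu⟩
        | @cons _ x _ h w' =>
          have huev : hcEven u := ((mem_UFin_iff_aux c u).mp hu).1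
          have h1 : hcEven u ∧ hcAdj u x ∧ c u x ≠ 0 := by
            rcases h with h | h
            · exact h
            · exfalso
              have := hcAdj_parity_aux h.2.1
              have hxu : hcEven x := h.1
              exact (this.mp hxu) huev
          have hxodd : ¬ hcEven x := (hcAdj_parity_aux h1.2.1).mp huev
          cases w' with
          | nil =>
            exact absurd ((mem_UFin_iff_aux c v).mp hv).1 hxodd
          | @cons _ y _ h' w'' =>
            have h2 : hcEven y ∧ hcAdj y x ∧ c y x ≠ 0 := by
              rcases h' with h' | h'
              · exact absurd h'.1 hxodd
              · exact h'
            have hy : y ∈ UFin c :=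
              (mem_UFin_iff_aux c y).mpr ⟨h2.1, x, h2.2.1, h2.2.2⟩
            have e1 : Matrix.single (⟨u, hu⟩ : {i : Fin n → Bool // i ∈ UFin c})
                ⟨y, hy⟩ (1 : ℂ) ∈ A :=
              eAB ⟨u, hu⟩ ⟨y, hy⟩ x hxodd h1.2.1 h2.2.1 h1.2.2 h2.2.2
            have hlt : w''.length < N := by
              simp only [SimpleGraph.Walk.length_cons] at hlen
              omega
            have e2 : Matrix.single (⟨y, hy⟩ : {i : Fin n → Bool // i ∈ UFin c})
                ⟨v, hv⟩ (1 : ℂ) ∈ A :=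
              ih w''.length hlt y v w'' rfl hy hv
            have := A.mul_mem e1 e2
            rwa [Matrix.single_mul_single_same, one_mul] at this
    -- all matrix units
    have allE : ∀ a b : {i : Fin n → Bool // i ∈ UFin c},
        Matrix.single a b (1 : ℂ) ∈ A := by
      intro a b
      have ha : inU c a.1 := (mem_UFin_iff_aux c a.1).mp a.2
      have hb : inU c b.1 := (mem_UFin_iff_aux c b.1).mp b.2
      obtain ⟨ja, hja, hca⟩ := ha.2
      obtain ⟨jb, hjb, hcb⟩ := hb.2
      have hr : (suppGraph c).Reachable a.1 b.1 :=
        hconn a.1 b.1 ⟨ja, Or.inl ⟨ha.1, hja, hca⟩⟩ ⟨jb, Or.inl ⟨hb.1, hjb, hcb⟩⟩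
      obtain ⟨w⟩ := hr
      have := walkE w.length a.1 b.1 w rfl a.2 b.2
      simpa using this
    rw [eq_top_iff]
    intro M _
    rw [Matrix.matrix_eq_sum_single M]
    apply Subalgebra.sum_mem
    intro a _
    apply Subalgebra.sum_mem
    intro b _
    have : Matrix.single a b (M a b)
        = (M a b) • Matrix.single a b (1 : ℂ) := by
      rw [Matrix.smul_single, smul_eq_mul, mul_one]
    rw [this]
    exact A.smul_mem (allE a b) _
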